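/- arXiv:2006.08036 — 2 statements merged into one kernel-verified Lean document; each statement's English description precedes it below -/
import Mathlib

section
/- (Proposition 1(ii), conditional of the multivariate Student's-t.) Let ν > 0, μ ∈ ℝ^p, Σ positive definite, partitioned in blocks according to x = (x1,x2) with dim(x1) = p1, dim(x2) = p2, p1 + p2 = p. Then for all x1 ∈ ℝ^{p1} and x2 ∈ ℝ^{p2}, the joint density factors as t_p((x1,x2)|μ,Σ,ν) = t_{p1}(x1|μ1,Σ11,ν) · t_{p2}(x2|μ_{2.1}, ((ν+δ1)/(ν+p1))·Σ_{22.1}, ν+p1), where μ_{2.1} = μ2 + Σ21 Σ11⁻¹ (x1−μ1), Σ_{22.1} = Σ22 − Σ21 Σ11⁻¹ Σ12 and δ1 = (x1−μ1)ᵀΣ11⁻¹(x1−μ1). In particular the conditional distribution of X2 given X1 = x1 is t_{p2}(μ_{2.1}, ((ν+δ1)/(ν+p1))Σ_{22.1}, ν+p1). -/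
open MeasureTheory Matrix Real Filter

/-- Squared Mahalanobis distance δ(x) = (x−μ)ᵀ S⁻¹ (x−μ). -/
noncomputable def mahalanobis {n : Type*} [Fintype n] [DecidableEq n]
    (μ : n → ℝ) (S : Matrix n n ℝ) (x : n → ℝ) : ℝ :=
  (x - μ) ⬝ᵥ (S⁻¹ *ᵥ (x - μ))

/-- The multivariate Student's-t density t_p(x|μ,S,ν). -/
noncomputable def tPdf {n : Type*} [Fintype n] [DecidableEq n]
    (μ : n → ℝ) (S : Matrix n n ℝ) (ν : ℝ) (x : n → ℝ) : ℝ :=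
  Real.Gamma (((Fintype.card n : ℝ) + ν) / 2) /
      (Real.Gamma (ν / 2) * Real.pi ^ ((Fintype.card n : ℝ) / 2) *
        ν ^ ((Fintype.card n : ℝ) / 2)) *
    S.det ^ (-(1 : ℝ) / 2) *
    (1 + mahalanobis μ S x / ν) ^ (-(((Fintype.card n : ℝ) + ν) / 2))

/-- The multivariate normal density φ_p(x|μ,S). -/
noncomputable def normalPdf {n : Type*} [Fintype n] [DecidableEq n]
    (μ : n → ℝ) (S : Matrix n n ℝ) (x : n → ℝ) : ℝ :=
  (2 * Real.pi) ^ (-(Fintype.card n : ℝ) / 2) * S.det ^ (-(1 : ℝ) / 2) *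
    Real.exp (-(mahalanobis μ S x) / 2)

/-- The Gamma(a,b) density h(u|a,b) (for u > 0). -/
noncomputable def gammaPdf (a b u : ℝ) : ℝ :=
  b ^ a / Real.Gamma a * u ^ (a - 1) * Real.exp (-(b * u))

/-- Standard normal pdf. -/
noncomputable def stdNormalPdf (x : ℝ) : ℝ :=
  (Real.sqrt (2 * Real.pi))⁻¹ * Real.exp (-(x ^ 2) / 2)

/-- Standard normal cdf. -/
noncomputable def stdNormalCdf (x : ℝ) : ℝ :=
  ∫ t in Set.Iic x, stdNormalPdf t

/-- Univariate Student's-t density with location c, scale s², κ degrees of freedom. -/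
noncomputable def tPdf1 (c s2 κ y : ℝ) : ℝ :=
  Real.Gamma ((1 + κ) / 2) /
      (Real.Gamma (κ / 2) * Real.sqrt (Real.pi * κ) * Real.sqrt s2) *
    (1 + (y - c) ^ 2 / (κ * s2)) ^ (-((1 + κ) / 2))

/-!
With `K = Σ₂₂ - Σ₂₁ Σ₁₁⁻¹ Σ₁₂`, the block factorisation `Σ = L (Σ₁₁ ⊕ K) Lᴴ` with `L` unit lower
block-triangular gives `det Σ = det Σ₁₁ · det K`, positive definiteness of `K`, and (applying `L⁻¹`
to `x - μ`) the splitting `δ(x) = δ₁ + q`, where `q` is the Mahalanobis distance of `x₂` from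
`μ₂.₁` with respect to `K`. All three densities are then positive, and their logarithms are affine
in `log Γ`, `log π`, `log det`, `log ν` and `log (ν + ·)`. The scale `c = (ν + δ₁)/(ν + p₁)` is the
one for which `ν + p₁ + q/c` is a multiple of `ν + δ₁ + q` and the `log (ν + p₁)` terms cancel.
-/

namespace Matrix

variable {m n R : Type*} [Fintype m] [Fintype n] [DecidableEq m] [DecidableEq n] [CommRing R]

theorem fromBlocks_eq_mul_mul_conjTranspose [StarRing R] {A : Matrix m m R} (hA : A.IsHermitian)
    [Invertible A] (B : Matrix m n R) (D : Matrix n n R) :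
    fromBlocks A B Bᴴ D =
      fromBlocks 1 0 (Bᴴ * A⁻¹) 1 * fromBlocks A 0 0 (D - Bᴴ * A⁻¹ * B) *
        (fromBlocks 1 0 (Bᴴ * A⁻¹) 1)ᴴ := by
  rw [fromBlocks_eq_of_invertible₁₁ A B Bᴴ D, fromBlocks_conjTranspose, invOf_eq_nonsing_inv,
    conjTranspose_mul, hA.inv.eq, conjTranspose_conjTranspose]
  simp

theorem isUnit_fromBlocks_one_zero (C : Matrix n m R) :
    IsUnit (fromBlocks (1 : Matrix m m R) 0 C (1 : Matrix n n R)) := by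
  simp

theorem PosDef.schur_complement₁₁ [PartialOrder R] [StarRing R] {A : Matrix m m R}
    {B : Matrix m n R} {D : Matrix n n R} (hM : (fromBlocks A B Bᴴ D).PosDef) [Invertible A] :
    (D - Bᴴ * A⁻¹ * B).PosDef := by
  rw [fromBlocks_eq_mul_mul_conjTranspose (isHermitian_fromBlocks_iff.1 hM.1).1,
    ← star_eq_conjTranspose, (isUnit_fromBlocks_one_zero _).posDef_star_right_conjugate_iff] at hM
  exact hM.submatrix Sum.inr_injective

theorem dotProduct_inv_conj_mulVec [StarRing R] [TrivialStar R] {L : Matrix n n R} (hL : IsUnit L)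
    (D : Matrix n n R) (y : n → R) :
    (L *ᵥ y) ⬝ᵥ ((L * D * Lᴴ)⁻¹ *ᵥ (L *ᵥ y)) = y ⬝ᵥ (D⁻¹ *ᵥ y) := by
  have hL' : IsUnit L.det := (isUnit_iff_isUnit_det L).1 hL
  rw [mulVec_mulVec, dotProduct_comm, dotProduct_mulVec, ← mulVec_transpose, dotProduct_comm,
    mulVec_mulVec, conjTranspose_eq_transpose_of_trivial, mul_inv_rev, mul_inv_rev,
    ← Matrix.mul_assoc, ← Matrix.mul_assoc, mul_nonsing_inv _ (det_transpose L ▸ hL'),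
    Matrix.one_mul, Matrix.mul_assoc, nonsing_inv_mul _ hL', Matrix.mul_one]

end Matrix

section Mahalanobis

variable {m n : Type*} [Fintype m] [Fintype n] [DecidableEq m] [DecidableEq n]

theorem mahalanobis_nonneg {S : Matrix n n ℝ} (hS : S.PosDef) (μ x : n → ℝ) :
    0 ≤ mahalanobis μ S x := by
  simpa only [star_trivial, mahalanobis] using hS.inv.posSemidef.dotProduct_mulVec_nonneg (x - μ)

theorem mahalanobis_smul {S : Matrix n n ℝ} (hS : IsUnit S) {c : ℝ} (hc : c ≠ 0)
    (μ x : n → ℝ) : mahalanobis μ (c • S) x = c⁻¹ * mahalanobis μ S x := by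
  have : Invertible c := invertibleOfNonzero hc
  rw [mahalanobis, mahalanobis, inv_smul S c ((isUnit_iff_isUnit_det S).1 hS), invOf_eq_inv,
    smul_mulVec, dotProduct_smul, smul_eq_mul]

theorem mahalanobis_fromBlocks {A : Matrix m m ℝ} (hA : A.IsHermitian) [Invertible A]
    (B : Matrix m n ℝ) (D : Matrix n n ℝ) (hK : IsUnit (D - Bᴴ * A⁻¹ * B))
    (μ1 x1 : m → ℝ) (μ2 x2 : n → ℝ) :
    mahalanobis (Sum.elim μ1 μ2) (fromBlocks A B Bᴴ D) (Sum.elim x1 x2) =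
      mahalanobis μ1 A x1 +
        mahalanobis (μ2 + Bᴴ *ᵥ (A⁻¹ *ᵥ (x1 - μ1))) (D - Bᴴ * A⁻¹ * B) x2 := by
  have hx : Sum.elim x1 x2 - Sum.elim μ1 μ2 = fromBlocks 1 0 (Bᴴ * A⁻¹) 1 *ᵥ
      Sum.elim (x1 - μ1) (x2 - (μ2 + Bᴴ *ᵥ (A⁻¹ *ᵥ (x1 - μ1)))) := by
    ext (i | i)
    · simp [fromBlocks_mulVec]
    · simp [fromBlocks_mulVec, mulVec_mulVec]
      ring
  have hdiag : IsUnit A ↔ IsUnit (D - Bᴴ * A⁻¹ * B) := iff_of_true (isUnit_of_invertible A) hK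
  rw [mahalanobis, hx, fromBlocks_eq_mul_mul_conjTranspose hA,
    dotProduct_inv_conj_mulVec (isUnit_fromBlocks_one_zero _),
    inv_fromBlocks_zero₂₁_of_isUnit_iff _ _ _ hdiag, fromBlocks_mulVec,
    sumElim_dotProduct_sumElim]
  simp [mahalanobis]

end Mahalanobis

section StudentT

variable {n : Type*} [Fintype n] [DecidableEq n]

theorem tPdf_pos {S : Matrix n n ℝ} (hS : S.PosDef) {ν : ℝ} (hν : 0 < ν) (μ x : n → ℝ) :
    0 < tPdf μ S ν x := by
  have hδ := mahalanobis_nonneg hS μ x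
  have hdet := hS.det_pos
  unfold tPdf
  positivity

theorem log_tPdf {S : Matrix n n ℝ} (hS : S.PosDef) {ν : ℝ} (hν : 0 < ν) (μ x : n → ℝ) :
    Real.log (tPdf μ S ν x) =
      Real.log (Real.Gamma ((Fintype.card n + ν) / 2)) - Real.log (Real.Gamma (ν / 2))
        - Fintype.card n / 2 * Real.log π - Real.log S.det / 2 + ν / 2 * Real.log ν
        - (Fintype.card n + ν) / 2 * Real.log (ν + mahalanobis μ S x) := by
  have hδ := mahalanobis_nonneg hS μ x
  have hdet := hS.det_pos
  have h1 : 1 + mahalanobis μ S x / ν = (ν + mahalanobis μ S x) / ν := by field_simp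
  rw [tPdf, h1, Real.log_mul (by positivity) (by positivity),
    Real.log_mul (by positivity) (by positivity), Real.log_div (by positivity) (by positivity),
    Real.log_mul (by positivity) (by positivity), Real.log_mul (by positivity) (by positivity),
    Real.log_rpow (by positivity), Real.log_rpow (by positivity), Real.log_rpow (by positivity),
    Real.log_rpow (by positivity), Real.log_div (by positivity) (by positivity)]
  ring

theorem log_tPdf_div_smul {K : Matrix n n ℝ} (hK : K.PosDef) {a κ : ℝ} (ha : 0 < a) (hκ : 0 < κ)
    (μ x : n → ℝ) :
    Real.log (tPdf μ ((a / κ) • K) κ x) =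
      Real.log (Real.Gamma ((Fintype.card n + κ) / 2)) - Real.log (Real.Gamma (κ / 2))
        - Fintype.card n / 2 * Real.log π - Real.log K.det / 2 + κ / 2 * Real.log a
        - (Fintype.card n + κ) / 2 * Real.log (a + mahalanobis μ K x) := by
  have hq := mahalanobis_nonneg hK μ x
  have hdet := hK.det_pos
  have hscale : κ + (a / κ)⁻¹ * mahalanobis μ K x = κ / a * (a + mahalanobis μ K x) := by
    field_simp
  rw [log_tPdf (hK.smul (div_pos ha hκ)) hκ, mahalanobis_smul hK.isUnit (div_pos ha hκ).ne',
    hscale, det_smul, Real.log_mul (by positivity) (by positivity),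
    Real.log_mul (by positivity) (by positivity), Real.log_pow,
    Real.log_div (by positivity) (by positivity), Real.log_div (by positivity) (by positivity)]
  ring

end StudentT

/-- Proposition 1(ii): conditional of the multivariate Student's-t. -/
theorem tPdf_conditional {p1 p2 : ℕ} (ν : ℝ) (hν : 0 < ν)
    (μ1 : Fin p1 → ℝ) (μ2 : Fin p2 → ℝ)
    (S11 : Matrix (Fin p1) (Fin p1) ℝ) (S12 : Matrix (Fin p1) (Fin p2) ℝ)
    (S21 : Matrix (Fin p2) (Fin p1) ℝ) (S22 : Matrix (Fin p2) (Fin p2) ℝ)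
    (hS : (Matrix.fromBlocks S11 S12 S21 S22).PosDef)
    (x1 : Fin p1 → ℝ) (x2 : Fin p2 → ℝ) :
    tPdf (Sum.elim μ1 μ2) (Matrix.fromBlocks S11 S12 S21 S22) ν (Sum.elim x1 x2)
      = tPdf μ1 S11 ν x1 *
        tPdf (μ2 + S21 *ᵥ (S11⁻¹ *ᵥ (x1 - μ1)))
          (((ν + mahalanobis μ1 S11 x1) / (ν + (p1 : ℝ))) • (S22 - S21 * S11⁻¹ * S12))
          (ν + (p1 : ℝ)) x2 := by
  obtain ⟨-, rfl, -, -⟩ := isHermitian_fromBlocks_iff.1 hS.1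
  have hA : S11.PosDef := hS.submatrix Sum.inl_injective
  have : Invertible S11 := hA.isUnit.invertible
  have hK := hS.schur_complement₁₁
  have hδ1 := mahalanobis_nonneg hA μ1 x1
  have hc : 0 < (ν + mahalanobis μ1 S11 x1) / (ν + p1) := by positivity
  have hνp : 0 < ν + (p1 : ℝ) := by positivity
  apply Real.log_injOn_pos (tPdf_pos hS hν _ _)
    (mul_pos (tPdf_pos hA hν _ _) (tPdf_pos (hK.smul hc) hνp _ _))
  rw [Real.log_mul (tPdf_pos hA hν _ _).ne' (tPdf_pos (hK.smul hc) hνp _ _).ne',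
    log_tPdf hS hν, log_tPdf hA hν, log_tPdf_div_smul hK (by positivity) hνp,
    mahalanobis_fromBlocks hA.1 _ _ hK.isUnit, det_fromBlocks₁₁, invOf_eq_nonsing_inv,
    Real.log_mul hA.det_pos.ne' hK.det_pos.ne']
  simp only [Fintype.card_sum, Fintype.card_fin, Nat.cast_add]
  rw [show ((p2 : ℝ) + (ν + p1)) / 2 = (p1 + p2 + ν) / 2 by ring,
    show ((p1 : ℝ) + ν) / 2 = (ν + p1) / 2 by ring, add_assoc ν]
  ring
end

section
/- (Inverse Mills ratio correction, equation for E[Y1 | C = 1].) Let σ > 0, ρ ∈ (−1,1), and m1, m2 ∈ ℝ (the linear predictors xᵀβ and wᵀγ). Let (Y1,Y2) be bivariate normal with mean (m1,m2) and covariance Σ = [[σ², ρσ],[ρσ, 1]]. Then ∫_ℝ ∫_0^∞ y1 · φ₂((y1,y2)|(m1,m2),Σ) dy2 dy1 = m1·Φ(m2) + ρσ·φ(m2), and consequently, since P(Y2 > 0) = Φ(m2), E[Y1 | Y2 > 0] = m1 + ρσ·λ(m2), where λ(a) = φ(a)/Φ(a) is the inverse Mills ratio and φ, Φ are the standard normal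 pdf and cdf. -/
open MeasureTheory Matrix Real Filter

/-!
Conditioning on `Y₂`, the bivariate density factors as
`φ(y₁ | m₁ + ρσ (y₂ - m₂), σ²(1 - ρ²)) · φ(y₂ - m₂)`. Integrating out `y₁` first (Fubini)
leaves `∫_{y₂ > 0} (m₁ + ρσ (y₂ - m₂)) φ(y₂ - m₂) dy₂`. Reflecting `y₂ ↦ m₂ - y₂` turns the
first part into `m₁ Φ(m₂)`, and the second is `ρσ φ(m₂)` because
`(y - m) φ(y - m) = -(d/dy) φ(y - m)`. Integrability on the product comes from the shear
`(y₁, y₂) ↦ (y₁ - ρσ y₂, y₂)`, which preserves Lebesgue measure and turns the integrand into a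
sum of products of integrable functions.
-/

open ProbabilityTheory Set
open scoped NNReal Topology

lemma integrable_mul_gaussianPDFReal (μ : ℝ) (v : ℝ≥0) :
    Integrable (fun x => x * gaussianPDFReal μ v x) := by
  rcases eq_or_ne v 0 with rfl | hv
  · simp
  have h := memLp_one_iff_integrable.mp (memLp_id_gaussianReal (μ := μ) (v := v) 1)
  rw [gaussianReal_of_var_ne_zero _ hv, gaussianPDF_def,
    integrable_withDensity_iff_integrable_smul' (by fun_prop)
      (ae_of_all _ fun _ => ENNReal.ofReal_lt_top)] at h
  simpa [ENNReal.toReal_ofReal (gaussianPDFReal_nonneg _ _ _), mul_comm] using h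

lemma integrable_sub_mul_gaussianPDFReal (μ : ℝ) (v : ℝ≥0) :
    Integrable (fun x => (x - μ) * gaussianPDFReal μ v x) := by
  convert (integrable_mul_gaussianPDFReal μ v).sub
    ((integrable_gaussianPDFReal μ v).const_mul μ) using 2 with x
  simp only [Pi.sub_apply, sub_mul]

lemma integral_mul_gaussianPDFReal (μ : ℝ) {v : ℝ≥0} (hv : v ≠ 0) :
    ∫ x, x * gaussianPDFReal μ v x = μ := by
  simpa [mul_comm] using (integral_gaussianReal_eq_integral_smul (f := id) hv).symm.trans
    integral_id_gaussianReal

lemma hasDerivAt_gaussianPDFReal (μ : ℝ) (v : ℝ≥0) (x : ℝ) :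
    HasDerivAt (gaussianPDFReal μ v) (-((x - μ) / v) * gaussianPDFReal μ v x) x := by
  have hexponent : HasDerivAt (fun y => -(y - μ) ^ 2 / (2 * (v : ℝ))) (-((x - μ) / v)) x :=
    ((((hasDerivAt_id x).sub_const μ).pow 2).neg.div_const (2 * (v : ℝ))).congr_deriv
      (by simp only [id]; ring)
  exact (hexponent.exp.const_mul (√(2 * π * v))⁻¹).congr_deriv (by rw [gaussianPDFReal]; ring)

lemma tendsto_gaussianPDFReal_atTop (μ : ℝ) (v : ℝ≥0) :
    Tendsto (gaussianPDFReal μ v) atTop (𝓝 0) := by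
  rcases eq_or_ne v 0 with rfl | hv
  · rw [gaussianPDFReal_zero_var]
    exact tendsto_const_nhds
  have hexp : Tendsto (fun x => -(x - μ) ^ 2 / (2 * (v : ℝ))) atTop atBot :=
    (tendsto_neg_atTop_atBot.comp ((tendsto_pow_atTop two_ne_zero).comp
      (tendsto_atTop_add_const_right _ (-μ) tendsto_id))).atBot_div_const (by positivity)
  simpa [gaussianPDFReal_def] using (Real.tendsto_exp_atBot.comp hexp).const_mul (√(2 * π * v))⁻¹

lemma integral_Ioi_sub_mul_gaussianPDFReal (μ : ℝ) {v : ℝ≥0} (hv : v ≠ 0) (a : ℝ) :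
    ∫ x in Ioi a, (x - μ) * gaussianPDFReal μ v x = v * gaussianPDFReal μ v a := by
  have hderiv : ∀ x ∈ Ici a, HasDerivAt (fun x => -(v * gaussianPDFReal μ v x))
      ((x - μ) * gaussianPDFReal μ v x) x := by
    intro x _
    exact ((hasDerivAt_gaussianPDFReal μ v x).const_mul (v : ℝ)).neg.congr_deriv (by field_simp)
  have hlim : Tendsto (fun x => -(v * gaussianPDFReal μ v x)) atTop (𝓝 0) := by
    simpa using ((tendsto_gaussianPDFReal_atTop μ v).const_mul (v : ℝ)).neg
  rw [integral_Ioi_of_hasDerivAt_of_tendsto' hderiv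
    (integrable_sub_mul_gaussianPDFReal μ v).integrableOn hlim]
  ring

lemma stdNormalPdf_eq_gaussianPDFReal : stdNormalPdf = gaussianPDFReal 0 1 := by
  ext x
  simp [stdNormalPdf, gaussianPDFReal]

lemma gaussianPDFReal_one_eq_stdNormalPdf (μ x : ℝ) :
    gaussianPDFReal μ 1 x = stdNormalPdf (μ - x) := by
  simp [stdNormalPdf_eq_gaussianPDFReal, gaussianPDFReal, sub_sq_comm x μ]

lemma stdNormalCdf_pos (x : ℝ) : 0 < stdNormalCdf x := by
  rw [stdNormalCdf, stdNormalPdf_eq_gaussianPDFReal,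
    setIntegral_pos_iff_support_of_nonneg_ae (ae_of_all _ (gaussianPDFReal_nonneg 0 1))
      (integrable_gaussianPDFReal 0 1).integrableOn,
    Function.support_eq_univ fun t => (gaussianPDFReal_pos 0 1 t one_ne_zero).ne', univ_inter,
    Real.volume_Iic]
  exact ENNReal.zero_lt_top

lemma integral_Ioi_gaussianPDFReal_one (μ a : ℝ) :
    ∫ x in Ioi a, gaussianPDFReal μ 1 x = stdNormalCdf (μ - a) := by
  have hpre : (fun x => μ - x) ⁻¹' Iio (μ - a) = Ioi a := by
    ext x; simp
  rw [stdNormalCdf, integral_Iic_eq_integral_Iio,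
    ← (Measure.measurePreserving_sub_left volume μ).setIntegral_preimage_emb
      (MeasurableEquiv.subLeft μ).measurableEmbedding stdNormalPdf (Iio (μ - a)), hpre]
  exact setIntegral_congr_fun measurableSet_Ioi fun x _ =>
    gaussianPDFReal_one_eq_stdNormalPdf μ x

lemma MeasureTheory.Integrable.comp_fst_sub_mul_snd {E : Type*} [NormedAddCommGroup E]
    {F : ℝ × ℝ → E} (hF : Integrable F (volume.prod volume)) (b : ℝ) :
    Integrable (fun p : ℝ × ℝ => F (p.1 - b * p.2, p.2)) (volume.prod volume) := by
  have hshear : MeasurePreserving (fun p : ℝ × ℝ => (p.1 - b * p.2, p.2))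
      (volume.prod volume) (volume.prod volume) :=
    (Measure.measurePreserving_swap.comp ((MeasurePreserving.id volume).skew_product
      (g := fun y x => x - b * y) (by fun_prop)
      (ae_of_all _ fun y => (measurePreserving_sub_right volume (b * y)).map_eq))).comp
      Measure.measurePreserving_swap
  exact (hshear.integrable_comp hF.1).mpr hF

lemma mahalanobis_fin_two {a c d : ℝ} (hdet : a * d - c ^ 2 ≠ 0) (m1 m2 y1 y2 : ℝ) :
    mahalanobis ![m1, m2] !![a, c; c, d] ![y1, y2]
      = (d * (y1 - m1) ^ 2 - 2 * c * (y1 - m1) * (y2 - m2) + a * (y2 - m2) ^ 2) /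
          (a * d - c ^ 2) := by
  rw [mahalanobis, inv_def, det_fin_two_of, adjugate_fin_two_of, Ring.inverse_eq_inv']
  simp only [dotProduct, Pi.sub_apply, mulVec, Matrix.smul_apply, of_apply, cons_val',
    cons_val_fin_one, smul_eq_mul, Fin.sum_univ_two, cons_val_zero, cons_val_one, mul_neg, neg_mul]
  field_simp
  ring

lemma normalPdf_fin_two {a c d : ℝ} (hd : 0 < d) (hdet : 0 < a * d - c ^ 2) (m1 m2 y1 y2 : ℝ) :
    normalPdf ![m1, m2] !![a, c; c, d] ![y1, y2]
      = gaussianPDFReal (m1 + c / d * (y2 - m2)) ((a * d - c ^ 2) / d).toNNReal y1 *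
          gaussianPDFReal m2 d.toNNReal y2 := by
  have hv : 0 < (a * d - c ^ 2) / d := div_pos hdet hd
  rw [normalPdf, mahalanobis_fin_two hdet.ne', det_fin_two_of, ← sq, gaussianPDFReal,
    gaussianPDFReal, Real.coe_toNNReal _ hv.le, Real.coe_toNNReal _ hd.le]
  have hconst : (2 * π)⁻¹ * (√(a * d - c ^ 2))⁻¹
      = (√(2 * π * ((a * d - c ^ 2) / d)))⁻¹ * (√(2 * π * d))⁻¹ := by
    rw [← mul_inv, ← mul_inv, ← Real.sqrt_mul (by positivity),
      show 2 * π * ((a * d - c ^ 2) / d) * (2 * π * d) = (2 * π) ^ 2 * (a * d - c ^ 2) by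
        field_simp,
      Real.sqrt_mul (by positivity), Real.sqrt_sq (by positivity)]
  have hexp : -((d * (y1 - m1) ^ 2 - 2 * c * (y1 - m1) * (y2 - m2) + a * (y2 - m2) ^ 2) /
        (a * d - c ^ 2)) / 2
      = -(y1 - (m1 + c / d * (y2 - m2))) ^ 2 / (2 * ((a * d - c ^ 2) / d)) +
          -(y2 - m2) ^ 2 / (2 * d) := by
    generalize hD : a * d - c ^ 2 = D at hdet ⊢
    field_simp
    linear_combination -(y2 - m2) ^ 2 * hD
  rw [hexp, Real.exp_add, show (2 * π) ^ (-(Fintype.card (Fin 2) : ℝ) / 2) = (2 * π)⁻¹ by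
    simp [Real.rpow_neg_one], show (a * d - c ^ 2) ^ (-(1 : ℝ) / 2) = (√(a * d - c ^ 2))⁻¹ by
    rw [neg_div, Real.rpow_neg hdet.le, Real.sqrt_eq_rpow]]
  linear_combination (rexp (-(y1 - (m1 + c / d * (y2 - m2))) ^ 2 / (2 * ((a * d - c ^ 2) / d))) *
    rexp (-(y2 - m2) ^ 2 / (2 * d))) * hconst

lemma integral_Ioi_mul_gaussianPDFReal_linear_mean (α β μ : ℝ) {v : ℝ≥0} (hv : v ≠ 0) :
    ∫ y1, ∫ y2 in Ioi 0, y1 * (gaussianPDFReal (α + β * (y2 - μ)) v y1 * gaussianPDFReal μ 1 y2)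
      = α * stdNormalCdf μ + β * stdNormalPdf μ := by
  have hF : Integrable (fun p : ℝ × ℝ =>
      (p.1 + β * p.2) * gaussianPDFReal (α - β * μ) v p.1 * gaussianPDFReal μ 1 p.2)
      (volume.prod volume) := by
    have h1 := (integrable_mul_gaussianPDFReal (α - β * μ) v).mul_prod
      (integrable_gaussianPDFReal μ 1)
    have h2 := (integrable_gaussianPDFReal (α - β * μ) v).mul_prod
      ((integrable_mul_gaussianPDFReal μ 1).const_mul β)
    refine (h1.add h2).congr (ae_of_all _ fun p => ?_)
    simp only [Pi.add_apply]
    ring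
  have hInt : Integrable (Function.uncurry fun y1 y2 =>
      y1 * (gaussianPDFReal (α + β * (y2 - μ)) v y1 * gaussianPDFReal μ 1 y2))
      (volume.prod (volume.restrict (Ioi 0))) := by
    refine ((hF.comp_fst_sub_mul_snd β).mono_measure
      (Measure.prod_mono le_rfl Measure.restrict_le_self)).congr (ae_of_all _ fun p => ?_)
    simp only [Function.uncurry, gaussianPDFReal_sub, sub_add_cancel]
    rw [show α - β * μ + β * p.2 = α + β * (p.2 - μ) by ring, mul_assoc]
  have hinner : ∀ y2,
      ∫ y1, y1 * (gaussianPDFReal (α + β * (y2 - μ)) v y1 * gaussianPDFReal μ 1 y2) =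
        α * gaussianPDFReal μ 1 y2 + β * ((y2 - μ) * gaussianPDFReal μ 1 y2) := by
    intro y2
    simp_rw [← mul_assoc]
    rw [integral_mul_const, integral_mul_gaussianPDFReal _ hv]
    ring
  rw [integral_integral_swap hInt]
  simp_rw [hinner]
  rw [integral_add ((integrable_gaussianPDFReal μ 1).integrableOn.const_mul α)
      ((integrable_sub_mul_gaussianPDFReal μ 1).integrableOn.const_mul β),
    integral_const_mul, integral_const_mul, integral_Ioi_gaussianPDFReal_one,
    integral_Ioi_sub_mul_gaussianPDFReal μ one_ne_zero, sub_zero, NNReal.coe_one, one_mul,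
    gaussianPDFReal_one_eq_stdNormalPdf, sub_zero]

/-- inverse Mills ratio correction, E[Y1 | C = 1]. -/
theorem heckman_inverse_mills (σ ρ m1 m2 : ℝ)
    (hσ : 0 < σ) (hρ1 : -1 < ρ) (hρ2 : ρ < 1) :
    (∫ y1 : ℝ, ∫ y2 in Set.Ioi (0 : ℝ),
        y1 * normalPdf ![m1, m2] !![σ ^ 2, ρ * σ; ρ * σ, 1] ![y1, y2])
      = m1 * stdNormalCdf m2 + ρ * σ * stdNormalPdf m2 ∧
    (∫ y1 : ℝ, ∫ y2 in Set.Ioi (0 : ℝ),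
        y1 * normalPdf ![m1, m2] !![σ ^ 2, ρ * σ; ρ * σ, 1] ![y1, y2]) /
        stdNormalCdf m2
      = m1 + ρ * σ * (stdNormalPdf m2 / stdNormalCdf m2) := by
  have hdet : 0 < σ ^ 2 * 1 - (ρ * σ) ^ 2 := by
    rw [show σ ^ 2 * 1 - (ρ * σ) ^ 2 = σ ^ 2 * (1 - ρ ^ 2) by ring]
    exact mul_pos (by positivity) (by nlinarith)
  have hmean : (∫ y1 : ℝ, ∫ y2 in Set.Ioi (0 : ℝ),
      y1 * normalPdf ![m1, m2] !![σ ^ 2, ρ * σ; ρ * σ, 1] ![y1, y2])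
      = m1 * stdNormalCdf m2 + ρ * σ * stdNormalPdf m2 := by
    simp_rw [normalPdf_fin_two one_pos hdet, div_one, Real.toNNReal_one]
    exact integral_Ioi_mul_gaussianPDFReal_linear_mean m1 (ρ * σ) m2
      (Real.toNNReal_pos.mpr hdet).ne'
  refine ⟨hmean, ?_⟩
  rw [hmean]
  field_simp [(stdNormalCdf_pos m2).ne']
end
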